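/- Let L be a first-order language extending the language of rings whose only function symbols are those of the language of rings, and let D be an integral domain which is an L-structure equipped with a topological system (topologies τ_n on each D^n such that term maps are continuous, singletons in D are closed, and for every relation symbol R and every choice of coordinates the set of tuples with nonzero coordinates realizing R, and the set realizing its negation, placed at those coordinates with zeros elsewhere, are open). Then every subset of D^n defined by a quantifier-free L-formula with parameters from D is a finite union of special locally closed subsets of D^n. -/

import Mathlib

/-!
Special locally closed sets are closed under finite intersections, and the complement of each
is a finite union of them: the complement of a zero set `t = 0` is the basic special open set
`t ≠ 0`, and a point outside a relation set `{(∀ j, t_{i_j} ≠ 0) ∧ R(…)}` either has some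
`t_{i_j} = 0` or lies in the corresponding set where `R` fails. Hence finite unions of special
locally closed sets form a Boolean algebra of subsets of `D^n`. It contains the atomic sets:
`t₁ = t₂` is the zero set of `t₁ - t₂`, and `R(t_1, …, t_m)` is the union, over the possible
supports `A ⊆ {1, …, m}` of `(t_i)_i`, of the set where exactly the `t_i` with `i ∈ A` are
nonzero and `R` holds at the point placing them at the coordinates in `A`.
-/

open FirstOrder

/-- A *special closed* subset of `D^n`: a finite intersection of zero sets of
`L(D)`-terms, where `L = ring ⊕ Lrel` is a language extending the language of rings with
only relation symbols added, and parameters from `D` are represented by extra variables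
evaluated via `id`. -/
def IsSpecialClosed (Lrel : FirstOrder.Language) (D : Type*) [CommRing D]
    [FirstOrder.Ring.CompatibleRing D] [Lrel.Structure D] {n : ℕ}
    (S : Set (Fin n → D)) : Prop :=
  ∃ (s : ℕ) (t : Fin s → (FirstOrder.Language.ring.sum Lrel).Term (Fin n ⊕ D)),
    S = ⋂ i, {a : Fin n → D | (t i).realize (Sum.elim a id) = 0}

/-- A *basic special open* subset of `D^n`: either the nonzero set of an `L(D)`-term, or
the set where the relation symbol `R` holds (respectively fails) at the point whose
`i_j`-th coordinate is `t_{i_j}(a)` and whose other coordinates are `0`, with all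
`t_{i_j}(a) ≠ 0`. -/
def IsBasicSpecialOpen (Lrel : FirstOrder.Language) (D : Type*) [CommRing D]
    [FirstOrder.Ring.CompatibleRing D] [Lrel.Structure D] {n : ℕ}
    (S : Set (Fin n → D)) : Prop :=
  (∃ t : (FirstOrder.Language.ring.sum Lrel).Term (Fin n ⊕ D),
      S = {a : Fin n → D | t.realize (Sum.elim a id) ≠ 0}) ∨
  (∃ (m k : ℕ) (R : Lrel.Relations m) (j : Fin k → Fin m), StrictMono j ∧
    ∃ t : Fin k → (FirstOrder.Language.ring.sum Lrel).Term (Fin n ⊕ D),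
      S = {a : Fin n → D | (∀ l, (t l).realize (Sum.elim a id) ≠ 0) ∧
            FirstOrder.Language.Structure.RelMap R
              (Function.extend j (fun l => (t l).realize (Sum.elim a id)) 0)} ∨
      S = {a : Fin n → D | (∀ l, (t l).realize (Sum.elim a id) ≠ 0) ∧
            ¬ FirstOrder.Language.Structure.RelMap R
              (Function.extend j (fun l => (t l).realize (Sum.elim a id)) 0)})

/-- A *special open* subset of `D^n`: a finite intersection of basic special open sets. -/
def IsSpecialOpen (Lrel : FirstOrder.Language) (D : Type*) [CommRing D]
    [FirstOrder.Ring.CompatibleRing D] [Lrel.Structure D] {n : ℕ}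
    (S : Set (Fin n → D)) : Prop :=
  ∃ (s : ℕ) (U : Fin s → Set (Fin n → D)),
    (∀ i, IsBasicSpecialOpen Lrel D (U i)) ∧ S = ⋂ i, U i

/-- A *special locally closed* subset of `D^n`: an intersection of a special open subset
with a special closed subset. -/
def IsSpecialLocallyClosed (Lrel : FirstOrder.Language) (D : Type*) [CommRing D]
    [FirstOrder.Ring.CompatibleRing D] [Lrel.Structure D] {n : ℕ}
    (S : Set (Fin n → D)) : Prop :=
  ∃ U C : Set (Fin n → D),
    IsSpecialOpen Lrel D U ∧ IsSpecialClosed Lrel D C ∧ S = U ∩ C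


open FirstOrder.Language

theorem exists_fin_iff_exists_finite {β : Type*} {Q : Set β → Prop} :
    (∃ (s : ℕ) (f : Fin s → β), Q (Set.range f)) ↔ ∃ T : Set β, T.Finite ∧ Q T :=
  ⟨fun ⟨_, f, h⟩ => ⟨_, Set.finite_range f, h⟩,
    fun ⟨_, hT, h⟩ => let ⟨s, f, _, hf⟩ := hT.fin_param; ⟨s, f, hf ▸ h⟩⟩

theorem Set.compl_setOf_forall_ne_zero_and {α ι M : Type*} [Zero M] (f : ι → α → M)
    (p : α → Prop) :
    {a | (∀ l, f l a ≠ 0) ∧ p a}ᶜ = (⋃ l, {a | f l a = 0}) ∪ {a | (∀ l, f l a ≠ 0) ∧ ¬ p a} := by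
  ext a
  by_cases h : ∀ l, f l a ≠ 0 <;> simp_all

theorem Function.extend_comp_self {α β γ : Type*} {j : α → β} (hj : j.Injective)
    {v e : β → γ} (hv : ∀ b ∉ Set.range j, v b = e b) : Function.extend j (v ∘ j) e = v := by
  funext b
  by_cases hb : b ∈ Set.range j
  · obtain ⟨a, rfl⟩ := hb
    exact hj.extend_apply _ _ a
  · rw [Function.extend_apply' _ _ _ hb, hv b hb]

theorem Fin.iff_exists_support_extend {M : Type*} [Zero M] {m : ℕ} (P : (Fin m → M) → Prop)
    (v : Fin m → M) :
    P v ↔ ∃ A : Finset (Fin m), (∀ l, v (A.orderEmbOfFin rfl l) ≠ 0) ∧ (∀ i ∉ A, v i = 0) ∧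
      P (Function.extend (A.orderEmbOfFin rfl) (v ∘ A.orderEmbOfFin rfl) 0) := by
  have extend_eq (A : Finset (Fin m)) (hA : ∀ i ∉ A, v i = 0) :
      Function.extend (A.orderEmbOfFin rfl) (v ∘ A.orderEmbOfFin rfl) 0 = v :=
    Function.extend_comp_self (A.orderEmbOfFin rfl).injective fun i hi =>
      hA i (by simpa [Finset.range_orderEmbOfFin] using hi)
  classical
  refine ⟨fun hv => ?_, fun ⟨A, _, hA, hP⟩ => extend_eq A hA ▸ hP⟩
  have hsupp : ∀ i ∉ Finset.univ.filter (v · ≠ 0), v i = 0 := by simp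
  refine ⟨Finset.univ.filter (v · ≠ 0), fun l => ?_, hsupp, (extend_eq _ hsupp).symm ▸ hv⟩
  exact (Finset.mem_filter.1 (Finset.orderEmbOfFin_mem _ rfl l)).2

theorem FirstOrder.Language.Term.realize_relabel_sumElim_finZeroElim {L : Language}
    {α M : Type*} [L.Structure M] (t : L.Term (α ⊕ Fin 0)) (v : α → M) (xs : Fin 0 → M) :
    (t.relabel (Sum.elim id finZeroElim)).realize v = t.realize (Sum.elim v xs) := by
  rw [Term.realize_relabel]
  congr 1
  funext x
  rcases x with x | x
  · rfl
  · exact x.elim0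

section Special

variable {Lrel : Language} {D : Type*} [CommRing D] [Ring.CompatibleRing D] [Lrel.Structure D]
  {n : ℕ}

theorem exists_term_realize_eq_sub {α : Type*} (t₁ t₂ : (ring.sum Lrel).Term α) :
    ∃ t : (ring.sum Lrel).Term α, ∀ v : α → D, t.realize v = t₁.realize v - t₂.realize v :=
  ⟨(LHom.sumInl.onTerm (Term.var 0 + -Term.var 1 : ring.Term (Fin 2))).subst ![t₁, t₂],
    fun v => by simp [sub_eq_add_neg]⟩

theorem isSpecialClosed_iff {C : Set (Fin n → D)} :
    IsSpecialClosed Lrel D C ↔ ∃ T : Set ((ring.sum Lrel).Term (Fin n ⊕ D)),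
      T.Finite ∧ C = ⋂ t ∈ T, {a | t.realize (Sum.elim a id) = 0} := by
  refine Iff.trans ?_ exists_fin_iff_exists_finite
  simp only [IsSpecialClosed, Set.biInter_range]

theorem isSpecialOpen_iff {U : Set (Fin n → D)} :
    IsSpecialOpen Lrel D U ↔ ∃ T : Set (Set (Fin n → D)),
      T.Finite ∧ (∀ V ∈ T, IsBasicSpecialOpen Lrel D V) ∧ U = ⋂₀ T := by
  refine Iff.trans ?_ exists_fin_iff_exists_finite
  simp only [IsSpecialOpen, Set.forall_mem_range, Set.sInter_range]

theorem isSpecialClosed_univ : IsSpecialClosed Lrel D (Set.univ : Set (Fin n → D)) :=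
  isSpecialClosed_iff.2 ⟨∅, Set.finite_empty, by simp⟩

theorem isSpecialOpen_univ : IsSpecialOpen Lrel D (Set.univ : Set (Fin n → D)) :=
  isSpecialOpen_iff.2 ⟨∅, Set.finite_empty, by simp, by simp⟩

theorem infClosed_isSpecialClosed : InfClosed {C : Set (Fin n → D) | IsSpecialClosed Lrel D C} := by
  intro C hC C' hC'
  obtain ⟨T, hT, rfl⟩ := isSpecialClosed_iff.1 hC
  obtain ⟨T', hT', rfl⟩ := isSpecialClosed_iff.1 hC'
  exact isSpecialClosed_iff.2 ⟨T ∪ T', hT.union hT', (Set.biInter_union _ _ _).symm⟩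

theorem infClosed_isSpecialOpen : InfClosed {U : Set (Fin n → D) | IsSpecialOpen Lrel D U} := by
  intro U hU U' hU'
  obtain ⟨T, hT, hbasic, rfl⟩ := isSpecialOpen_iff.1 hU
  obtain ⟨T', hT', hbasic', rfl⟩ := isSpecialOpen_iff.1 hU'
  exact isSpecialOpen_iff.2 ⟨T ∪ T', hT.union hT',
    fun V hV => hV.elim (hbasic V) (hbasic' V), (Set.sInter_union _ _).symm⟩

theorem isSpecialClosed_setOf_realize_eq_zero (t : (ring.sum Lrel).Term (Fin n ⊕ D)) :
    IsSpecialClosed Lrel D {a : Fin n → D | t.realize (Sum.elim a id) = 0} :=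
  ⟨1, fun _ => t, (Set.iInter_const _).symm⟩

theorem isSpecialClosed_setOf_realize_eq (t₁ t₂ : (ring.sum Lrel).Term (Fin n ⊕ D)) :
    IsSpecialClosed Lrel D
      {a : Fin n → D | t₁.realize (Sum.elim a id) = t₂.realize (Sum.elim a id)} := by
  obtain ⟨t, ht⟩ := exists_term_realize_eq_sub (D := D) t₁ t₂
  have hset : {a : Fin n → D | t₁.realize (Sum.elim a id) = t₂.realize (Sum.elim a id)} =
      {a | t.realize (Sum.elim a id) = 0} := by
    simp only [ht, sub_eq_zero]
  exact hset ▸ isSpecialClosed_setOf_realize_eq_zero t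

theorem IsBasicSpecialOpen.isSpecialOpen {U : Set (Fin n → D)}
    (hU : IsBasicSpecialOpen Lrel D U) : IsSpecialOpen Lrel D U :=
  ⟨1, fun _ => U, fun _ => hU, (Set.iInter_const _).symm⟩

theorem IsSpecialOpen.isSpecialLocallyClosed {U : Set (Fin n → D)}
    (hU : IsSpecialOpen Lrel D U) : IsSpecialLocallyClosed Lrel D U :=
  ⟨U, Set.univ, hU, isSpecialClosed_univ, (Set.inter_univ U).symm⟩

theorem IsSpecialClosed.isSpecialLocallyClosed {C : Set (Fin n → D)}
    (hC : IsSpecialClosed Lrel D C) : IsSpecialLocallyClosed Lrel D C :=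
  ⟨Set.univ, C, isSpecialOpen_univ, hC, (Set.univ_inter C).symm⟩

theorem infClosed_isSpecialLocallyClosed :
    InfClosed {P : Set (Fin n → D) | IsSpecialLocallyClosed Lrel D P} := by
  rintro _ ⟨U, C, hU, hC, rfl⟩ _ ⟨U', C', hU', hC', rfl⟩
  exact ⟨U ∩ U', C ∩ C', infClosed_isSpecialOpen hU hU', infClosed_isSpecialClosed hC hC',
    Set.inter_inter_inter_comm U C U' C'⟩

variable (Lrel D) in
def IsSpecialConstructible (S : Set (Fin n → D)) : Prop :=
  ∃ (s : ℕ) (P : Fin s → Set (Fin n → D)),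
    (∀ i, IsSpecialLocallyClosed Lrel D (P i)) ∧ S = ⋃ i, P i

theorem isSpecialConstructible_iff {S : Set (Fin n → D)} :
    IsSpecialConstructible Lrel D S ↔ ∃ T : Set (Set (Fin n → D)),
      T.Finite ∧ (∀ P ∈ T, IsSpecialLocallyClosed Lrel D P) ∧ S = ⋃₀ T := by
  refine Iff.trans ?_ exists_fin_iff_exists_finite
  simp only [IsSpecialConstructible, Set.forall_mem_range, Set.sUnion_range]

theorem IsSpecialLocallyClosed.isSpecialConstructible {P : Set (Fin n → D)}
    (hP : IsSpecialLocallyClosed Lrel D P) : IsSpecialConstructible Lrel D P :=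
  ⟨1, fun _ => P, fun _ => hP, (Set.iUnion_const _).symm⟩

theorem IsSpecialClosed.isSpecialConstructible {C : Set (Fin n → D)}
    (hC : IsSpecialClosed Lrel D C) : IsSpecialConstructible Lrel D C :=
  hC.isSpecialLocallyClosed.isSpecialConstructible

theorem IsBasicSpecialOpen.isSpecialConstructible {U : Set (Fin n → D)}
    (hU : IsBasicSpecialOpen Lrel D U) : IsSpecialConstructible Lrel D U :=
  hU.isSpecialOpen.isSpecialLocallyClosed.isSpecialConstructible

theorem isSpecialConstructible_empty : IsSpecialConstructible Lrel D (∅ : Set (Fin n → D)) :=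
  ⟨0, Fin.elim0, Fin.rec0, by simp⟩

theorem isSpecialConstructible_univ : IsSpecialConstructible Lrel D (Set.univ : Set (Fin n → D)) :=
  isSpecialClosed_univ.isSpecialConstructible

theorem supClosed_isSpecialConstructible :
    SupClosed {S : Set (Fin n → D) | IsSpecialConstructible Lrel D S} := by
  intro S hS S' hS'
  obtain ⟨T, hT, hP, rfl⟩ := isSpecialConstructible_iff.1 hS
  obtain ⟨T', hT', hP', rfl⟩ := isSpecialConstructible_iff.1 hS'
  exact isSpecialConstructible_iff.2 ⟨T ∪ T', hT.union hT',
    fun P hP'' => hP''.elim (hP P) (hP' P), (Set.sUnion_union _ _).symm⟩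

theorem infClosed_isSpecialConstructible :
    InfClosed {S : Set (Fin n → D) | IsSpecialConstructible Lrel D S} := by
  intro S hS S' hS'
  obtain ⟨T, hT, hP, rfl⟩ := isSpecialConstructible_iff.1 hS
  obtain ⟨T', hT', hP', rfl⟩ := isSpecialConstructible_iff.1 hS'
  refine isSpecialConstructible_iff.2 ⟨Set.image2 (· ∩ ·) T T', hT.image2 _ hT', ?_, ?_⟩
  · rintro _ ⟨P, hPT, P', hPT', rfl⟩
    exact infClosed_isSpecialLocallyClosed (hP P hPT) (hP' P' hPT')
  · rw [Set.sUnion_image2]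
    simp only [Set.inf_eq_inter, Set.sUnion_eq_biUnion, Set.iUnion₂_inter, Set.inter_iUnion₂]
    exact Set.iUnion₂_comm _

theorem isSpecialConstructible_iUnion {ι : Type*} [Finite ι] {S : ι → Set (Fin n → D)}
    (hS : ∀ i, IsSpecialConstructible Lrel D (S i)) :
    IsSpecialConstructible Lrel D (⋃ i, S i) :=
  supClosed_isSpecialConstructible.iSup_mem isSpecialConstructible_empty hS

theorem isSpecialConstructible_iUnion_setOf_realize_eq_zero {k : ℕ}
    (t : Fin k → (ring.sum Lrel).Term (Fin n ⊕ D)) :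
    IsSpecialConstructible Lrel D (⋃ l, {a : Fin n → D | (t l).realize (Sum.elim a id) = 0}) :=
  isSpecialConstructible_iUnion fun l =>
    (isSpecialClosed_setOf_realize_eq_zero (t l)).isSpecialConstructible

theorem IsBasicSpecialOpen.isSpecialConstructible_compl {U : Set (Fin n → D)}
    (hU : IsBasicSpecialOpen Lrel D U) : IsSpecialConstructible Lrel D Uᶜ := by
  rcases hU with ⟨t, rfl⟩ | ⟨m, k, R, j, hj, t, rfl | rfl⟩
  · have hset : {a : Fin n → D | t.realize (Sum.elim a id) ≠ 0}ᶜ =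
        {a | t.realize (Sum.elim a id) = 0} := by
      simp only [Set.compl_ofPred, not_not]
    rw [hset]
    exact (isSpecialClosed_setOf_realize_eq_zero t).isSpecialConstructible
  · rw [Set.compl_setOf_forall_ne_zero_and]
    exact supClosed_isSpecialConstructible (isSpecialConstructible_iUnion_setOf_realize_eq_zero t)
      (IsBasicSpecialOpen.isSpecialConstructible (Or.inr ⟨m, k, R, j, hj, t, Or.inr rfl⟩))
  · rw [Set.compl_setOf_forall_ne_zero_and]
    simp only [not_not]
    exact supClosed_isSpecialConstructible (isSpecialConstructible_iUnion_setOf_realize_eq_zero t)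
      (IsBasicSpecialOpen.isSpecialConstructible (Or.inr ⟨m, k, R, j, hj, t, Or.inl rfl⟩))

theorem IsSpecialClosed.isSpecialConstructible_compl {C : Set (Fin n → D)}
    (hC : IsSpecialClosed Lrel D C) : IsSpecialConstructible Lrel D Cᶜ := by
  obtain ⟨T, hT, rfl⟩ := isSpecialClosed_iff.1 hC
  rw [Set.compl_iInter₂]
  exact supClosed_isSpecialConstructible.biSup_mem hT isSpecialConstructible_empty fun t _ =>
    IsBasicSpecialOpen.isSpecialConstructible (Or.inl ⟨t, rfl⟩)

theorem IsSpecialOpen.isSpecialConstructible_compl {U : Set (Fin n → D)}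
    (hU : IsSpecialOpen Lrel D U) : IsSpecialConstructible Lrel D Uᶜ := by
  obtain ⟨T, hT, hbasic, rfl⟩ := isSpecialOpen_iff.1 hU
  rw [Set.compl_sInter, Set.sUnion_image]
  exact supClosed_isSpecialConstructible.biSup_mem hT isSpecialConstructible_empty fun V hV =>
    (hbasic V hV).isSpecialConstructible_compl

theorem IsSpecialLocallyClosed.isSpecialConstructible_compl {P : Set (Fin n → D)}
    (hP : IsSpecialLocallyClosed Lrel D P) : IsSpecialConstructible Lrel D Pᶜ := by
  obtain ⟨U, C, hU, hC, rfl⟩ := hP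
  rw [Set.compl_inter]
  exact supClosed_isSpecialConstructible hU.isSpecialConstructible_compl
    hC.isSpecialConstructible_compl

theorem IsSpecialConstructible.compl {S : Set (Fin n → D)}
    (hS : IsSpecialConstructible Lrel D S) : IsSpecialConstructible Lrel D Sᶜ := by
  obtain ⟨T, hT, hP, rfl⟩ := isSpecialConstructible_iff.1 hS
  rw [Set.compl_sUnion, Set.sInter_image]
  exact infClosed_isSpecialConstructible.biInf_mem hT isSpecialConstructible_univ fun P hP' =>
    (hP P hP').isSpecialConstructible_compl

theorem isSpecialConstructible_setOf_relMap {m : ℕ} (R : Lrel.Relations m)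
    (t : Fin m → (ring.sum Lrel).Term (Fin n ⊕ D)) :
    IsSpecialConstructible Lrel D
      {a : Fin n → D | Structure.RelMap R fun i => (t i).realize (Sum.elim a id)} := by
  have hsplit : {a : Fin n → D | Structure.RelMap R fun i => (t i).realize (Sum.elim a id)} =
      ⋃ A : Finset (Fin m),
        {a | (∀ l, (t (A.orderEmbOfFin rfl l)).realize (Sum.elim a id) ≠ 0) ∧
          Structure.RelMap R (Function.extend (A.orderEmbOfFin rfl)
            (fun l => (t (A.orderEmbOfFin rfl l)).realize (Sum.elim a id)) 0)} ∩
        ⋂ i ∈ (A : Set (Fin m))ᶜ, {a | (t i).realize (Sum.elim a id) = 0} := by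
    ext a
    simp only [Set.mem_ofPred_eq, Set.mem_iUnion, Set.mem_inter_iff, Set.mem_iInter,
      Set.mem_compl_iff, Finset.mem_coe]
    rw [Fin.iff_exists_support_extend (Structure.RelMap R)]
    simp only [Function.comp_def, and_assoc, and_comm (a := ∀ i ∉ _, _)]
  rw [hsplit]
  refine isSpecialConstructible_iUnion fun A => IsSpecialLocallyClosed.isSpecialConstructible ?_
  refine infClosed_isSpecialLocallyClosed
    (IsBasicSpecialOpen.isSpecialOpen ?_).isSpecialLocallyClosed
    (IsSpecialClosed.isSpecialLocallyClosed ?_)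
  · exact Or.inr ⟨m, A.card, R, A.orderEmbOfFin rfl, (A.orderEmbOfFin rfl).strictMono,
      fun l => t (A.orderEmbOfFin rfl l), Or.inl rfl⟩
  · exact infClosed_isSpecialClosed.biInf_mem (Set.toFinite _) isSpecialClosed_univ fun i _ =>
      isSpecialClosed_setOf_realize_eq_zero (t i)

theorem isSpecialConstructible_setOf_realize {φ : (ring.sum Lrel).Formula (Fin n ⊕ D)}
    (hφ : φ.IsQF) : IsSpecialConstructible Lrel D {a : Fin n → D | φ.Realize (Sum.elim a id)} := by
  induction hφ with
  | falsum => exact isSpecialConstructible_empty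
  | of_isAtomic hφ =>
    cases hφ with
    | equal t₁ t₂ =>
      simp only [Formula.Realize, BoundedFormula.realize_bdEqual,
        ← Term.realize_relabel_sumElim_finZeroElim]
      exact (isSpecialClosed_setOf_realize_eq _ _).isSpecialConstructible
    | rel R ts =>
      rcases R with R | R
      · exact isEmptyElim R
      · show IsSpecialConstructible Lrel D
          {a | Structure.RelMap R fun i => (ts i).realize (Sum.elim (Sum.elim a id) default)}
        simp only [← Term.realize_relabel_sumElim_finZeroElim]
        exact isSpecialConstructible_setOf_relMap R _
  | imp _ _ ih₁ ih₂ =>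
    simp only [Formula.Realize, BoundedFormula.realize_imp, imp_iff_not_or, Set.ofPred_or]
    exact supClosed_isSpecialConstructible ih₁.compl ih₂

end Special

theorem piecewise_continuity_statement_4_general
    {Lrel : FirstOrder.Language} {D : Type*} [CommRing D]
    [FirstOrder.Ring.CompatibleRing D] [Lrel.Structure D]
    -- a quantifier-free definable set
    {n : ℕ} (S : Set (Fin n → D))
    (φ : (FirstOrder.Language.ring.sum Lrel).Formula (Fin n ⊕ D))
    (hφ : FirstOrder.Language.BoundedFormula.IsQF φ)
    (hS : S = {a : Fin n → D | φ.Realize (Sum.elim a id)}) :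
    ∃ (s : ℕ) (P : Fin s → Set (Fin n → D)),
      (∀ i, IsSpecialLocallyClosed Lrel D (P i)) ∧ S = ⋃ i, P i :=
  hS ▸ isSpecialConstructible_setOf_realize hφ

/-- Let `L` be a language extending the language of rings whose only
function symbols are the ring ones (formalized as `L = ring ⊕ Lrel` with `Lrel`
relational), and let `D` be an integral domain which is an `L`-structure equipped with a
topological system.  Then every subset of `D^n` defined by a quantifier-free `L`-formula
with parameters from `D` is a finite union of special locally closed subsets of `D^n`. -/
theorem piecewise_continuity_statement_4
    {Lrel : FirstOrder.Language} [Lrel.IsRelational] {D : Type*} [CommRing D] [IsDomain D]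
    [FirstOrder.Ring.CompatibleRing D] [Lrel.Structure D]
    -- the topological system
    (τ : ∀ m : ℕ, TopologicalSpace (Fin m → D))
    (hterm : ∀ (m s : ℕ) (t : Fin s → (FirstOrder.Language.ring.sum Lrel).Term (Fin m ⊕ D)),
      @Continuous _ _ (τ m) (τ s) fun a l => (t l).realize (Sum.elim a id))
    (hsingleton : ∀ a : D, @IsClosed _ (τ 1) {x : Fin 1 → D | x 0 = a})
    (hrel : ∀ (m k : ℕ) (R : Lrel.Relations m) (j : Fin k → Fin m), StrictMono j →
      @IsOpen _ (τ k) {b : Fin k → D | (∀ l, b l ≠ 0) ∧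
        FirstOrder.Language.Structure.RelMap R (Function.extend j b 0)} ∧
      @IsOpen _ (τ k) {b : Fin k → D | (∀ l, b l ≠ 0) ∧
        ¬ FirstOrder.Language.Structure.RelMap R (Function.extend j b 0)})
    -- a quantifier-free definable set
    {n : ℕ} (S : Set (Fin n → D))
    (φ : (FirstOrder.Language.ring.sum Lrel).Formula (Fin n ⊕ D))
    (hφ : FirstOrder.Language.BoundedFormula.IsQF φ)
    (hS : S = {a : Fin n → D | φ.Realize (Sum.elim a id)}) :
    ∃ (s : ℕ) (P : Fin s → Set (Fin n → D)),
      (∀ i, IsSpecialLocallyClosed Lrel D (P i)) ∧ S = ⋃ i, P i :=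
  piecewise_continuity_statement_4_general S φ hφ hS
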